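/- arXiv:2504.05151 — 3 statements merged into one kernel-verified Lean document; each statement's English description precedes it below -/
import Mathlib

section
/- With the recursively defined polynomials $P^{[i]}$ as in the block Clenshaw recurrence for a block upper Hessenberg matrix $H$ with invertible subdiagonal blocks ($P^{[0]} = I_s$, $P^{[1]}(\lambda) = \lambda I - \Phi_1$, $P^{[i]}(\lambda) = P^{[i-1]}(\lambda)(\lambda\Gamma_i^{-1} - \Gamma_i^{-1}\Phi_i) - \sum_{h=1}^{i-1}P^{[h-1]}(\lambda)\Gamma_h^{-1}\Xi_{h,i}$, with $\Gamma_1 = I_s$), one has for all $1 \le i \le j$: $(P^{[i-1]}(H) \circ E_1)\,\Gamma_i^{-1} = E_i$, where $E_i = e_i \otimes I_s$. -/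
/-!
Induction on `i`. Expanding `P^{[i]}` by its recurrence and applying the induction hypothesis
to every `P^{[h-1]}` with `h ≤ i`, the factors `Γₕ Γₕ⁻¹` cancel and
`P^{[i]}(H) ∘ E₁ = H Eᵢ − ∑_{h ≤ i} Eₕ Ξ_{h,i}`. Since `H` is block upper Hessenberg, its
`i`-th block column is `∑_{h ≤ i} Eₕ Ξ_{h,i} + E_{i+1} Γ_{i+1}`, leaving `E_{i+1} Γ_{i+1}`.
-/

open Matrix Polynomial

abbrev Mat (s : ℕ) := Matrix (Fin s) (Fin s) ℂ

/-- The `(p,q)` block (of size `s × s`) of a `js × js` block matrix. -/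
def blk {j s : ℕ} (H : Matrix (Fin j × Fin s) (Fin j × Fin s) ℂ) (p q : Fin j) :
    Mat s := Matrix.of fun a b => H (p, a) (q, b)

/-- The `i`-th block canonical vector `E_i = e_i ⊗ I_s`. -/
def blkE {j s : ℕ} (i : Fin j) : Matrix (Fin j × Fin s) (Fin s) ℂ :=
  Matrix.of fun pa b => if pa.1 = i ∧ pa.2 = b then 1 else 0

/-- Block upper Hessenberg: all blocks strictly below the first subdiagonal vanish. -/
def BUH {j s : ℕ} (H : Matrix (Fin j × Fin s) (Fin j × Fin s) ℂ) : Prop :=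
  ∀ p q : Fin j, (q : ℕ) + 1 < (p : ℕ) → blk H p q = 0

/-- The action `P(N) ∘ W := ∑ᵢ Nⁱ W Pᵢ` of a matrix polynomial on a block vector. -/
noncomputable def act {n : Type*} [Fintype n] [DecidableEq n] {s : ℕ}
    (P : Polynomial (Mat s)) (N : Matrix n n ℂ) (W : Matrix n (Fin s) ℂ) :
    Matrix n (Fin s) ℂ :=
  ∑ i ∈ Finset.range (P.natDegree + 1), (N ^ i) * W * P.coeff i

/-- Evaluation of a matrix polynomial at a scalar: `P(z) = ∑ᵢ zⁱ Pᵢ`. -/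
noncomputable def evalS {s : ℕ} (P : Polynomial (Mat s)) (z : ℂ) : Mat s :=
  ∑ i ∈ Finset.range (P.natDegree + 1), z ^ i • P.coeff i

/-- The subdiagonal block `Γ_i = H_{(i-1)(i-2)}` (paper indexing, `2 ≤ i ≤ j`),
with the convention `Γ_i = I` out of range (in particular `Γ₁ = I`). -/
noncomputable def Gam {j s : ℕ} (H : Matrix (Fin j × Fin s) (Fin j × Fin s) ℂ)
    (i : ℕ) : Mat s :=
  if h : 2 ≤ i ∧ i ≤ j then blk H ⟨i - 1, by omega⟩ ⟨i - 2, by omega⟩ else 1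

/-- Diagonal block `Φ_i = H_{(i-1)(i-1)}` (paper indexing, `1 ≤ i ≤ j`). -/
noncomputable def PhiD {j s : ℕ} (H : Matrix (Fin j × Fin s) (Fin j × Fin s) ℂ)
    (i : ℕ) : Mat s :=
  if h : 1 ≤ i ∧ i ≤ j then blk H ⟨i - 1, by omega⟩ ⟨i - 1, by omega⟩ else 0

/-- Block `Ξ_{p,q} = H_{(p-1)(q-1)}` (paper indexing). -/
noncomputable def XiD {j s : ℕ} (H : Matrix (Fin j × Fin s) (Fin j × Fin s) ℂ)
    (p q : ℕ) : Mat s :=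
  if h : 1 ≤ p ∧ p ≤ j ∧ 1 ≤ q ∧ q ≤ j then
    blk H ⟨p - 1, by omega⟩ ⟨q - 1, by omega⟩ else 0

/-- The block Clenshaw recurrence:
`P⁰ = I`, `P¹(λ) = λI − Φ₁`,
`Pⁱ(λ) = Pⁱ⁻¹(λ)(λΓᵢ⁻¹ − Γᵢ⁻¹Φᵢ) − ∑_{h=1}^{i-1} Pʰ⁻¹(λ) Γₕ⁻¹ Ξ_{h,i}`  (with `Γ₁ = I`). -/
def ClenshawRec {j s : ℕ} (H : Matrix (Fin j × Fin s) (Fin j × Fin s) ℂ)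
    (P : ℕ → Polynomial (Mat s)) : Prop :=
  P 0 = 1 ∧
  P 1 = Polynomial.X - Polynomial.C (PhiD H 1) ∧
  ∀ i : ℕ, 2 ≤ i → i ≤ j →
    P i = P (i - 1) * (Polynomial.X * Polynomial.C (Gam H i)⁻¹ -
            Polynomial.C ((Gam H i)⁻¹ * PhiD H i)) -
          ∑ h ∈ Finset.Icc 1 (i - 1),
            P (h - 1) * Polynomial.C ((Gam H h)⁻¹ * XiD H h i)


section Action

variable {s : ℕ} {n : Type*} [Fintype n] [DecidableEq n]

lemma act_eq_sum_range (P : Polynomial (Mat s)) {N : ℕ} (hN : P.natDegree < N)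
    (H : Matrix n n ℂ) (W : Matrix n (Fin s) ℂ) :
    act P H W = ∑ k ∈ Finset.range N, H ^ k * W * P.coeff k := by
  refine Finset.sum_subset (Finset.range_subset_range.2 hN) fun k _ hk => ?_
  rw [Finset.mem_range, not_lt] at hk
  rw [Polynomial.coeff_eq_zero_of_natDegree_lt (by omega), Matrix.mul_zero]

lemma act_add (P Q : Polynomial (Mat s)) (H : Matrix n n ℂ) (W : Matrix n (Fin s) ℂ) :
    act (P + Q) H W = act P H W + act Q H W := by
  set N := max P.natDegree Q.natDegree + 1
  have hN := Polynomial.natDegree_add_le P Q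
  rw [act_eq_sum_range (P + Q) (N := N) (by omega), act_eq_sum_range P (N := N) (by omega),
    act_eq_sum_range Q (N := N) (by omega), ← Finset.sum_add_distrib]
  simp only [Polynomial.coeff_add, Matrix.mul_add]

noncomputable def actAddHom (H : Matrix n n ℂ) (W : Matrix n (Fin s) ℂ) :
    Polynomial (Mat s) →+ Matrix n (Fin s) ℂ :=
  AddMonoidHom.mk' (fun P => act P H W) fun P Q => act_add P Q H W

lemma act_sub (P Q : Polynomial (Mat s)) (H : Matrix n n ℂ) (W : Matrix n (Fin s) ℂ) :
    act (P - Q) H W = act P H W - act Q H W :=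
  map_sub (actAddHom H W) P Q

lemma act_sum {ι : Type*} (t : Finset ι) (f : ι → Polynomial (Mat s))
    (H : Matrix n n ℂ) (W : Matrix n (Fin s) ℂ) :
    act (∑ h ∈ t, f h) H W = ∑ h ∈ t, act (f h) H W :=
  map_sum (actAddHom H W) f t

lemma act_one (H : Matrix n n ℂ) (W : Matrix n (Fin s) ℂ) : act 1 H W = W := by
  simp [act]

lemma act_mul_C (P : Polynomial (Mat s)) (A : Mat s) (H : Matrix n n ℂ)
    (W : Matrix n (Fin s) ℂ) :
    act (P * Polynomial.C A) H W = act P H W * A := by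
  rw [act_eq_sum_range (P * Polynomial.C A) (N := P.natDegree + 1)
    (Polynomial.natDegree_mul_le.trans_lt (by simp)), act, Matrix.sum_mul]
  simp only [Polynomial.coeff_mul_C, Matrix.mul_assoc]

lemma act_mul_X (P : Polynomial (Mat s)) (H : Matrix n n ℂ) (W : Matrix n (Fin s) ℂ) :
    act (P * Polynomial.X) H W = H * act P H W := by
  have hX : (Polynomial.X : Polynomial (Mat s)).natDegree ≤ 1 := Polynomial.natDegree_X_le
  have hN : (P * Polynomial.X).natDegree < P.natDegree + 1 + 1 := by
    have := Polynomial.natDegree_mul_le (p := P) (q := Polynomial.X)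
    omega
  rw [act_eq_sum_range _ hN, Finset.sum_range_succ', act, Matrix.mul_sum]
  simp only [Polynomial.coeff_mul_X, Polynomial.mul_coeff_zero, Polynomial.coeff_X_zero,
    Matrix.mul_zero, add_zero, pow_succ', Matrix.mul_assoc]

end Action

section Blocks

variable {j s : ℕ}

noncomputable def blkE' (j s t : ℕ) : Matrix (Fin j × Fin s) (Fin s) ℂ :=
  if ht : t < j then blkE ⟨t, ht⟩ else 0

lemma blkE'_of_lt {t : ℕ} (ht : t < j) : blkE' j s t = blkE ⟨t, ht⟩ := dif_pos ht

lemma mul_blkE (H : Matrix (Fin j × Fin s) (Fin j × Fin s) ℂ) (p : Fin j) :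
    H * blkE (s := s) p = ∑ q : Fin j, blkE (s := s) q * blk H q p := by
  ext ⟨r, a⟩ b
  simp only [Matrix.mul_apply, blkE, blk, Matrix.sum_apply, Matrix.of_apply,
    Fintype.sum_prod_type, mul_ite, mul_one, mul_zero]
  rw [Finset.sum_comm]
  simp [ite_and, Finset.sum_ite_eq, Finset.sum_ite_eq']

lemma XiD_succ_succ (H : Matrix (Fin j × Fin s) (Fin j × Fin s) ℂ) {p q : ℕ}
    (hp : p < j) (hq : q < j) : XiD H (p + 1) (q + 1) = blk H ⟨p, hp⟩ ⟨q, hq⟩ :=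
  dif_pos ⟨by omega, by omega, by omega, by omega⟩

lemma XiD_self (H : Matrix (Fin j × Fin s) (Fin j × Fin s) ℂ) {k : ℕ} (hk : k ≤ j) :
    XiD H k k = PhiD H k := by
  by_cases h : 1 ≤ k
  · rw [XiD, PhiD, dif_pos ⟨h, hk, h, hk⟩, dif_pos ⟨h, hk⟩]
  · rw [XiD, PhiD, dif_neg (by omega), dif_neg (by omega)]

lemma XiD_succ_self (H : Matrix (Fin j × Fin s) (Fin j × Fin s) ℂ) {k : ℕ} (hk : k + 2 ≤ j) :
    XiD H (k + 2) (k + 1) = Gam H (k + 2) := by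
  rw [XiD, Gam, dif_pos ⟨by omega, by omega, by omega, by omega⟩, dif_pos ⟨by omega, hk⟩]
  rfl

lemma Gam_one (H : Matrix (Fin j × Fin s) (Fin j × Fin s) ℂ) : Gam H 1 = 1 :=
  dif_neg (by omega)

lemma isUnit_det_Gam (H : Matrix (Fin j × Fin s) (Fin j × Fin s) ℂ)
    (hinv : ∀ i : ℕ, 2 ≤ i → i ≤ j → IsUnit (Gam H i)) {k : ℕ} (hk : k ≤ j) :
    IsUnit (Gam H k).det := by
  by_cases h : 2 ≤ k
  · exact (Matrix.isUnit_iff_isUnit_det _).mp (hinv k h hk)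
  · rw [Gam, dif_neg (by omega), Matrix.det_one]
    exact isUnit_one

lemma mul_blkE'_of_BUH (H : Matrix (Fin j × Fin s) (Fin j × Fin s) ℂ) (hH : BUH H)
    {k : ℕ} (hk : k + 2 ≤ j) :
    H * blkE' j s k = ∑ t ∈ Finset.range (k + 2), blkE' j s t * XiD H (t + 1) (k + 1) := by
  have hkj : k < j := by omega
  rw [blkE'_of_lt hkj, mul_blkE,
    Finset.sum_subset (Finset.range_subset_range.2 hk) ?below_subdiagonal, Finset.sum_range]
  · refine Fintype.sum_congr _ _ fun q => ?_
    rw [blkE'_of_lt q.isLt, XiD_succ_succ H q.isLt hkj]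
  · intro t ht htk
    rw [Finset.mem_range] at ht htk
    rw [XiD_succ_succ H ht hkj, hH ⟨t, ht⟩ ⟨k, hkj⟩ (by simp only; omega), Matrix.mul_zero]

end Blocks

-- The `k = 0` case is the definition of `P^{[1]}`, because `Γ₁ = I`.
lemma ClenshawRec.succ {j s : ℕ} {H : Matrix (Fin j × Fin s) (Fin j × Fin s) ℂ}
    {P : ℕ → Polynomial (Mat s)} (hP : ClenshawRec H P) {k : ℕ} (hk : k < j) :
    P (k + 1) = P k * (Polynomial.X * Polynomial.C (Gam H (k + 1))⁻¹ -
        Polynomial.C ((Gam H (k + 1))⁻¹ * PhiD H (k + 1))) -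
      ∑ t ∈ Finset.range k, P t * Polynomial.C ((Gam H (t + 1))⁻¹ * XiD H (t + 1) (k + 1)) := by
  obtain ⟨hP0, hP1, hrec⟩ := hP
  cases k with
  | zero => simp [hP0, hP1, Gam_one]
  | succ k =>
    rw [hrec (k + 1 + 1) (by omega) (by omega), Nat.add_sub_cancel,
      ← Finset.Ico_add_one_right_eq_Icc, Finset.range_eq_Ico,
      ← Finset.sum_Ico_add' (fun h => P (h - 1) * Polynomial.C ((Gam H h)⁻¹ * XiD H h (k + 1 + 1)))
        0 (k + 1) 1]
    simp only [Nat.add_sub_cancel]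

lemma act_clenshaw_blkE' {j s : ℕ} {H : Matrix (Fin j × Fin s) (Fin j × Fin s) ℂ} (hH : BUH H)
    (hinv : ∀ i : ℕ, 2 ≤ i → i ≤ j → IsUnit (Gam H i))
    {P : ℕ → Polynomial (Mat s)} (hP : ClenshawRec H P) {k : ℕ} (hk : k < j) :
    act (P k) H (blkE' j s 0) = blkE' j s k * Gam H (k + 1) := by
  induction k using Nat.strong_induction_on with
  | _ k IH =>
  cases k with
  | zero => rw [hP.1, act_one, Gam_one, Matrix.mul_one]
  | succ k =>
    have hΓ := isUnit_det_Gam H hinv (k := k + 1) (by omega)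
    have hlower : ∀ t ∈ Finset.range k,
        act (P t * Polynomial.C ((Gam H (t + 1))⁻¹ * XiD H (t + 1) (k + 1))) H (blkE' j s 0) =
          blkE' j s t * XiD H (t + 1) (k + 1) := fun t ht => by
      rw [Finset.mem_range] at ht
      rw [act_mul_C, IH t (by omega) (by omega), Matrix.mul_assoc,
        Matrix.mul_nonsing_inv_cancel_left _ _ (isUnit_det_Gam H hinv (by omega))]
    have hreduce : act (P (k + 1)) H (blkE' j s 0) = H * blkE' j s k -
        blkE' j s k * PhiD H (k + 1) - ∑ t ∈ Finset.range k, blkE' j s t * XiD H (t + 1) (k + 1) := by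
      rw [hP.succ (k := k) (by omega), mul_sub, ← mul_assoc, act_sub, act_sub, act_mul_C,
        act_mul_X, act_mul_C, act_sum, Finset.sum_congr rfl hlower, IH k (by omega) (by omega),
        ← Matrix.mul_assoc H, Matrix.mul_nonsing_inv_cancel_right _ _ hΓ, Matrix.mul_assoc,
        Matrix.mul_nonsing_inv_cancel_left _ _ hΓ]
    rw [hreduce, mul_blkE'_of_BUH H hH (by omega), Finset.sum_range_succ, Finset.sum_range_succ,
      XiD_self H (by omega), XiD_succ_self H (by omega)]
    abel

/-- for the block Clenshaw polynomials, `(P^{[i-1]}(H) ∘ E₁) Γᵢ⁻¹ = Eᵢ`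
for all `1 ≤ i ≤ j`. -/
theorem clenshaw_intermediate {j s : ℕ} (hj : 0 < j)
    (H : Matrix (Fin j × Fin s) (Fin j × Fin s) ℂ) (hH : BUH H)
    (hinv : ∀ i : ℕ, 2 ≤ i → i ≤ j → IsUnit (Gam H i))
    (P : ℕ → Polynomial (Mat s)) (hP : ClenshawRec (j := j) H P) :
    ∀ (i : ℕ) (h1 : 1 ≤ i) (h2 : i ≤ j),
      act (P (i - 1)) H (blkE (⟨0, hj⟩ : Fin j)) * (Gam H i)⁻¹ =
        blkE (⟨i - 1, by omega⟩ : Fin j) := by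
  intro i h1 h2
  obtain ⟨k, rfl⟩ : ∃ k, i = k + 1 := ⟨i - 1, by omega⟩
  rw [← blkE'_of_lt hj, ← blkE'_of_lt, Nat.add_sub_cancel,
    act_clenshaw_blkE' hH hinv hP (by omega),
    Matrix.mul_nonsing_inv_cancel_right _ _ (isUnit_det_Gam H hinv h2)]
end

section
/- Let $H \in \mathbb{C}^{js\times js}$ be block upper Hessenberg with invertible subdiagonal blocks and let $\Lambda(z)$ be its block characteristic polynomial with respect to $E_1$ with leading coefficient $\Gamma_2^{-1}\cdots\Gamma_j^{-1}$. If $\theta$ is a simple eigenvalue of $H$ with right eigenvector $v$ and left eigenvector $w$, partitioned into $s$-blocks $v = (v_1,\ldots,v_j)$ and $w = (w_1,\ldots,w_j)$, then $w_1^* \Lambda(\theta) = 0$, $\Lambda(\theta) v_j = 0$, and $w^* v = w_1^* \Lambda'(\theta) v_j$. -/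
open Matrix Polynomial

/-!
Put `X(θ) = ∑ᵢ Gᵢ(θ) E₁ Λᵢ` with `Gᵢ(θ) = (θⁱ - Hⁱ)/(θ - H) = ∑ₖ θ^(i-1-k) Hᵏ`. As
`∑ᵢ Hⁱ E₁ Λᵢ = 0`, we get `(θ - H) X(θ) = E₁ Λ(θ)`, and differentiating in `θ`,
`E₁ Λ'(θ) = X(θ) + (θ - H) X'(θ)`. Since `H` is block upper Hessenberg, the only contribution to
the last block row of `X(θ)` is `Γⱼ ⋯ Γ₂ Λⱼ = I`. Hence `d = X(θ) vⱼ - v` has last block zero and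
`(θ - H) d` vanishes outside the first block row; back substitution through the invertible
subdiagonal blocks gives `d = 0`, i.e. `X(θ) vⱼ = v`. Multiplying the two identities by `w*` on the
left and `vⱼ` on the right yields the three claims.
-/

open Finset

section DivDiff

variable {R A : Type*} [CommRing R] [Ring A] [Algebra R A] (θ : R) (a : A)

/-- The divided difference `(θⁿ - aⁿ) / (θ - a)`. -/
def powDivDiff (n : ℕ) : A := ∑ k ∈ range n, θ ^ (n - 1 - k) • a ^ k

/-- The derivative of `powDivDiff θ a n` with respect to `θ`. -/
def powDivDiffDeriv (n : ℕ) : A := ∑ k ∈ range n, θ ^ (n - 1 - k) • powDivDiff θ a k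

theorem sub_mul_powDivDiff (n : ℕ) :
    (θ • 1 - a) * powDivDiff θ a n = θ ^ n • 1 - a ^ n := by
  have h := ((Commute.one_right a).smul_right θ).mul_neg_geom_sum₂ n
  simpa only [_root_.smul_pow, one_pow, mul_smul_comm, mul_one, powDivDiff] using h

theorem sub_mul_powDivDiffDeriv (n : ℕ) :
    (θ • 1 - a) * powDivDiffDeriv θ a n = ((n : R) * θ ^ (n - 1)) • 1 - powDivDiff θ a n := by
  have hpow : ∀ k ∈ range n, θ ^ (n - 1 - k) • θ ^ k • (1 : A) = θ ^ (n - 1) • 1 := by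
    intro k hk
    rw [smul_smul, ← pow_add, Nat.sub_add_cancel (by simp at hk; omega)]
  simp only [powDivDiffDeriv, mul_sum, mul_smul_comm, sub_mul_powDivDiff, smul_sub,
    sum_sub_distrib, sum_congr rfl hpow, sum_const, card_range]
  rw [← Nat.cast_smul_eq_nsmul R, smul_smul, powDivDiff]

end DivDiff

section MatrixPolynomialAction

variable {n : Type*} [Fintype n] {s : ℕ}

def actWith (F : ℕ → Matrix n n ℂ) (P : Polynomial (Mat s)) (W : Matrix n (Fin s) ℂ) :
    Matrix n (Fin s) ℂ :=
  ∑ i ∈ range (P.natDegree + 1), F i * W * P.coeff i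

theorem act_eq_actWith [DecidableEq n] (P : Polynomial (Mat s)) (N : Matrix n n ℂ)
    (W : Matrix n (Fin s) ℂ) : act P N W = actWith (N ^ ·) P W := rfl

theorem mul_actWith (M : Matrix n n ℂ) (F : ℕ → Matrix n n ℂ) (P : Polynomial (Mat s))
    (W : Matrix n (Fin s) ℂ) : M * actWith F P W = actWith (fun i => M * F i) P W := by
  simp only [actWith, Matrix.mul_sum, Matrix.mul_assoc]

theorem actWith_sub (F G : ℕ → Matrix n n ℂ) (P : Polynomial (Mat s)) (W : Matrix n (Fin s) ℂ) :
    actWith (fun i => F i - G i) P W = actWith F P W - actWith G P W := by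
  simp only [actWith, Matrix.sub_mul, sum_sub_distrib]

theorem evalS_eq_sum_range (P : Polynomial (Mat s)) (z : ℂ) {N : ℕ} (hN : P.natDegree < N) :
    evalS P z = ∑ i ∈ range N, z ^ i • P.coeff i := by
  have hf : ∀ i, z ^ i • (0 : Mat s) = 0 := fun _ => smul_zero _
  rw [evalS, ← sum_over_range' P hf N hN, sum_over_range P hf]

theorem evalS_derivative (P : Polynomial (Mat s)) (z : ℂ) :
    evalS (derivative P) z =
      ∑ i ∈ range (P.natDegree + 1), ((i : ℂ) * z ^ (i - 1)) • P.coeff i := by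
  have hdeg : (derivative P).natDegree < P.natDegree + 1 :=
    (natDegree_derivative_le P).trans_lt (by omega)
  have htop : (derivative P).coeff P.natDegree = 0 := by
    rw [coeff_derivative, coeff_eq_zero_of_natDegree_lt (Nat.lt_succ_self _), zero_mul]
  rw [evalS_eq_sum_range _ z hdeg, sum_range_succ, htop, smul_zero, add_zero,
    sum_range_succ' (fun i => ((i : ℂ) * z ^ (i - 1)) • P.coeff i)]
  simp only [Nat.cast_zero, zero_mul, zero_smul, add_zero, coeff_derivative, Nat.add_sub_cancel]
  refine sum_congr rfl fun i _ => ?_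
  rw [← Nat.cast_succ, ← Nat.cast_comm, ← nsmul_eq_mul, ← Nat.cast_smul_eq_nsmul ℂ, smul_smul,
    mul_comm]

theorem mul_evalS [DecidableEq n] (W : Matrix n (Fin s) ℂ) (P : Polynomial (Mat s)) (z : ℂ) :
    W * evalS P z = actWith (fun i => z ^ i • 1) P W := by
  simp only [evalS, actWith, Matrix.mul_sum, Matrix.mul_smul, Matrix.smul_mul, Matrix.one_mul]

theorem mul_evalS_derivative [DecidableEq n] (W : Matrix n (Fin s) ℂ) (P : Polynomial (Mat s))
    (z : ℂ) :
    W * evalS (derivative P) z = actWith (fun i => ((i : ℂ) * z ^ (i - 1)) • 1) P W := by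
  simp only [evalS_derivative, actWith, Matrix.mul_sum, Matrix.mul_smul, Matrix.smul_mul,
    Matrix.one_mul]

theorem mul_evalS_eq_sub_mul_actWith [DecidableEq n] {P : Polynomial (Mat s)} {N : Matrix n n ℂ}
    {W : Matrix n (Fin s) ℂ} (hP : act P N W = 0) (θ : ℂ) :
    W * evalS P θ = (θ • 1 - N) * actWith (powDivDiff θ N) P W := by
  rw [mul_actWith]
  simp only [sub_mul_powDivDiff]
  rw [actWith_sub, ← act_eq_actWith, hP, sub_zero, mul_evalS]

theorem mul_evalS_derivative_eq [DecidableEq n] (P : Polynomial (Mat s)) (N : Matrix n n ℂ)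
    (W : Matrix n (Fin s) ℂ) (θ : ℂ) :
    W * evalS (derivative P) θ =
      actWith (powDivDiff θ N) P W + (θ • 1 - N) * actWith (powDivDiffDeriv θ N) P W := by
  rw [mul_actWith]
  simp only [sub_mul_powDivDiffDeriv]
  rw [actWith_sub, mul_evalS_derivative, add_sub_cancel]

end MatrixPolynomialAction

section Blocks

variable {j s : ℕ}

def blkRow (Y : Matrix (Fin j × Fin s) (Fin s) ℂ) (p : Fin j) : Mat s :=
  Matrix.of fun a b => Y (p, a) b

def blkVec (x : Fin j × Fin s → ℂ) (p : Fin j) : Fin s → ℂ := fun a => x (p, a)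

theorem blk_mul (A B : Matrix (Fin j × Fin s) (Fin j × Fin s) ℂ) (p q : Fin j) :
    blk (A * B) p q = ∑ r, blk A p r * blk B r q := by
  ext a b
  simp [blk, Matrix.mul_apply, Matrix.sum_apply, Fintype.sum_prod_type]

theorem blk_one (p q : Fin j) :
    blk (1 : Matrix (Fin j × Fin s) (Fin j × Fin s) ℂ) p q = if p = q then 1 else 0 := by
  ext a b
  by_cases h : p = q <;> simp [blk, Matrix.one_apply, h]

theorem blk_smul_one_sub_of_ne (θ : ℂ) (H : Matrix (Fin j × Fin s) (Fin j × Fin s) ℂ)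
    {p q : Fin j} (h : p ≠ q) : blk (θ • 1 - H) p q = -blk H p q := by
  ext a b
  simp [blk, h]

theorem blk_sum {ι : Type*} (t : Finset ι)
    (F : ι → Matrix (Fin j × Fin s) (Fin j × Fin s) ℂ) (p q : Fin j) :
    blk (∑ i ∈ t, F i) p q = ∑ i ∈ t, blk (F i) p q := by
  ext a b
  simp only [blk, Matrix.of_apply, Matrix.sum_apply]

theorem blk_smul (c : ℂ) (A : Matrix (Fin j × Fin s) (Fin j × Fin s) ℂ) (p q : Fin j) :
    blk (c • A) p q = c • blk A p q := by
  ext a b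
  simp [blk]

theorem blkRow_mul (A : Matrix (Fin j × Fin s) (Fin j × Fin s) ℂ)
    (Y : Matrix (Fin j × Fin s) (Fin s) ℂ) (p : Fin j) :
    blkRow (A * Y) p = ∑ r, blk A p r * blkRow Y r := by
  ext a b
  simp [blkRow, blk, Matrix.mul_apply, Matrix.sum_apply, Fintype.sum_prod_type]

theorem blkRow_mul_right (Y : Matrix (Fin j × Fin s) (Fin s) ℂ) (C : Mat s) (p : Fin j) :
    blkRow (Y * C) p = blkRow Y p * C := by
  ext a b
  simp [blkRow, Matrix.mul_apply]

theorem blkRow_sum {ι : Type*} (t : Finset ι) (F : ι → Matrix (Fin j × Fin s) (Fin s) ℂ)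
    (p : Fin j) : blkRow (∑ i ∈ t, F i) p = ∑ i ∈ t, blkRow (F i) p := by
  ext a b
  simp only [blkRow, Matrix.of_apply, Matrix.sum_apply]

theorem blkRow_blkE (i p : Fin j) :
    blkRow (blkE i : Matrix (Fin j × Fin s) (Fin s) ℂ) p = if p = i then 1 else 0 := by
  ext a b
  by_cases h : p = i <;> simp [blkRow, blkE, h, Matrix.one_apply]

theorem blkRow_mul_blkE (A : Matrix (Fin j × Fin s) (Fin j × Fin s) ℂ) (p i : Fin j) :
    blkRow (A * (blkE i : Matrix (Fin j × Fin s) (Fin s) ℂ)) p = blk A p i := by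
  simp [blkRow_mul, blkRow_blkE]

theorem blkVec_mulVec (A : Matrix (Fin j × Fin s) (Fin j × Fin s) ℂ) (x : Fin j × Fin s → ℂ)
    (p : Fin j) : blkVec (A *ᵥ x) p = ∑ q, blk A p q *ᵥ blkVec x q := by
  ext a
  simp [blkVec, blk, Matrix.mulVec, dotProduct, Fintype.sum_prod_type]

theorem blkVec_mulVec_eq_blkRow_mulVec (Y : Matrix (Fin j × Fin s) (Fin s) ℂ) (u : Fin s → ℂ)
    (p : Fin j) :
    blkVec (Y *ᵥ u) p = blkRow Y p *ᵥ u := rfl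

theorem vecMul_blkE (x : Fin j × Fin s → ℂ) (i : Fin j) : x ᵥ* blkE i = blkVec x i := by
  ext b
  simp [vecMul, dotProduct, blkE, blkVec, Fintype.sum_prod_type, ite_and]

end Blocks

section Hessenberg

variable {j s : ℕ}

theorem BUH.eq_zero_of_blkVec_mulVec_eq_zero {A : Matrix (Fin j × Fin s) (Fin j × Fin s) ℂ}
    (hA : BUH A) (hsub : ∀ p q : Fin j, (p : ℕ) = q + 1 → IsUnit (blk A p q)) (hj : 0 < j)
    {d : Fin j × Fin s → ℂ} (hlast : blkVec d ⟨j - 1, Nat.sub_one_lt_of_lt hj⟩ = 0)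
    (hAd : ∀ p : Fin j, 0 < (p : ℕ) → blkVec (A *ᵥ d) p = 0) : d = 0 := by
  suffices h : ∀ m : ℕ, ∀ p : Fin j, j ≤ p + 1 + m → blkVec d p = 0 by
    ext ⟨p, a⟩
    exact congrFun (h j p (by omega)) a
  intro m
  induction m with
  | zero =>
    intro p hp
    rwa [show p = ⟨j - 1, Nat.sub_one_lt_of_lt hj⟩ from Fin.ext (by simp only; omega)]
  | succ m ih =>
    intro p hp
    by_cases hp' : j ≤ p + 1 + m
    · exact ih p hp'
    -- Block row `p + 1` of `A d` is `A_{p+1,p} d_p`: the blocks left of `p` vanish by the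
    -- Hessenberg shape, and `d_q = 0` for `q > p`.
    set p' : Fin j := ⟨p + 1, by omega⟩
    have hrow : blk A p' p *ᵥ blkVec d p = 0 := by
      rw [← hAd p' (Nat.succ_pos _), blkVec_mulVec, sum_eq_single p]
      · intro q _ hqp
        have hqp' : (q : ℕ) ≠ p := fun h => hqp (Fin.ext h)
        rcases lt_or_gt_of_ne hqp' with hlt | hgt
        · rw [hA p' q (by simp only [p']; omega), Matrix.zero_mulVec]
        · rw [ih q (by omega), Matrix.mulVec_zero]
      · simp
    exact Matrix.mulVec_injective_iff_isUnit.mpr (hsub p' p rfl)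
      (hrow.trans (Matrix.mulVec_zero _).symm)

variable {H : Matrix (Fin j × Fin s) (Fin j × Fin s) ℂ}

theorem Gam_eq_blk {p q : Fin j} (h : (p : ℕ) = q + 1) : Gam H (q + 2) = blk H p q := by
  rw [Gam, dif_pos ⟨by omega, by omega⟩]
  congr 1
  ext
  simp only
  omega

theorem BUH.smul_one_sub (hH : BUH H) (θ : ℂ) : BUH (θ • 1 - H) := fun p q h => by
  rw [blk_smul_one_sub_of_ne θ H (fun hpq => by subst hpq; omega), hH p q h, neg_zero]

theorem BUH.blk_pow_eq_zero (hH : BUH H) (k : ℕ) {p q : Fin j} (h : (q : ℕ) + k < p) :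
    blk (H ^ k) p q = 0 := by
  induction k generalizing p with
  | zero => rw [pow_zero, blk_one, if_neg (fun hpq => by subst hpq; omega)]
  | succ k ih =>
    rw [pow_succ', blk_mul]
    refine sum_eq_zero fun r _ => ?_
    by_cases hr : (r : ℕ) + 1 < p
    · rw [hH p r hr, zero_mul]
    · rw [ih (by omega), mul_zero]

theorem BUH.blk_pow_succ_diag (hH : BUH H) (k : ℕ) (hk : k + 1 < j) :
    blk (H ^ (k + 1)) ⟨k + 1, hk⟩ ⟨0, by omega⟩ =
      Gam H (k + 2) * blk (H ^ k) ⟨k, by omega⟩ ⟨0, by omega⟩ := by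
  rw [pow_succ', blk_mul, sum_eq_single ⟨k, by omega⟩, ← Gam_eq_blk rfl]
  · intro r _ hr
    have hrk : (r : ℕ) ≠ k := fun h => hr (Fin.ext h)
    rcases lt_or_gt_of_ne hrk with hlt | hgt
    · rw [hH _ r (by simp only; omega), zero_mul]
    · rw [hH.blk_pow_eq_zero k (by simp only; omega), mul_zero]
  · simp

theorem BUH.blk_pow_mul_prod_inv_Gam (hH : BUH H)
    (hinv : ∀ i : ℕ, 2 ≤ i → i ≤ j → IsUnit (Gam H i)) (k : ℕ) (hk : k < j) :
    blk (H ^ k) ⟨k, hk⟩ ⟨0, by omega⟩ *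
      ((List.range k).map fun m => (Gam H (m + 2))⁻¹).prod = 1 := by
  induction k with
  | zero => simp [blk_one]
  | succ k ih =>
    have hdet : IsUnit (Gam H (k + 2)).det :=
      (Matrix.isUnit_iff_isUnit_det _).mp (hinv (k + 2) (by omega) (by omega))
    rw [hH.blk_pow_succ_diag k hk, List.range_succ, List.map_append, List.prod_append,
      List.map_singleton, List.prod_singleton, Matrix.mul_assoc, ← Matrix.mul_assoc (blk _ _ _),
      ih (by omega), Matrix.one_mul, Matrix.mul_nonsing_inv _ hdet]

theorem BUH.blk_powDivDiff_eq_zero (hH : BUH H) (θ : ℂ) {i : ℕ} {p q : Fin j}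
    (h : (q : ℕ) + i ≤ p) : blk (powDivDiff θ H i) p q = 0 := by
  rw [powDivDiff, blk_sum]
  refine sum_eq_zero fun k hk => ?_
  rw [blk_smul, hH.blk_pow_eq_zero k (by simp at hk; omega), smul_zero]

theorem BUH.blk_powDivDiff_succ (hH : BUH H) (θ : ℂ) {i : ℕ} {p q : Fin j}
    (h : (p : ℕ) = q + i) : blk (powDivDiff θ H (i + 1)) p q = blk (H ^ i) p q := by
  rw [powDivDiff, blk_sum, sum_eq_single i]
  · rw [blk_smul, Nat.add_sub_cancel, Nat.sub_self, pow_zero, one_smul]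
  · intro k hk hki
    rw [blk_smul, hH.blk_pow_eq_zero k (by simp at hk; omega), smul_zero]
  · simp

theorem BUH.blkRow_last_actWith_powDivDiff (hH : BUH H)
    (hinv : ∀ i : ℕ, 2 ≤ i → i ≤ j → IsUnit (Gam H i)) (hj : 0 < j)
    {Λ : Polynomial (Mat s)} (hdeg : Λ.natDegree = j)
    (hlead : Λ.leadingCoeff = ((List.range (j - 1)).map (fun m => (Gam H (m + 2))⁻¹)).prod)
    (θ : ℂ) :
    blkRow (actWith (powDivDiff θ H) Λ (blkE (⟨0, hj⟩ : Fin j)))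
      ⟨j - 1, Nat.sub_one_lt_of_lt hj⟩ = 1 := by
  obtain ⟨m, rfl⟩ : ∃ m, j = m + 1 := ⟨j - 1, by omega⟩
  have hcoeff : Λ.coeff (m + 1) = Λ.leadingCoeff := by rw [leadingCoeff, hdeg]
  simp only [actWith, hdeg, blkRow_sum, blkRow_mul_right, blkRow_mul_blkE]
  rw [sum_range_succ, sum_eq_zero fun i hi => ?_, zero_add, hH.blk_powDivDiff_succ θ (by simp),
    hcoeff, hlead]
  · exact hH.blk_pow_mul_prod_inv_Gam hinv m (by omega)
  · rw [hH.blk_powDivDiff_eq_zero θ (by simp at hi ⊢; omega), Matrix.zero_mul]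

theorem BUH.actWith_powDivDiff_mulVec_blkVec_last (hH : BUH H)
    (hinv : ∀ i : ℕ, 2 ≤ i → i ≤ j → IsUnit (Gam H i)) (hj : 0 < j)
    {Λ : Polynomial (Mat s)} (hdeg : Λ.natDegree = j)
    (hlead : Λ.leadingCoeff = ((List.range (j - 1)).map (fun m => (Gam H (m + 2))⁻¹)).prod)
    (hann : act Λ H (blkE (⟨0, hj⟩ : Fin j)) = 0) {θ : ℂ} {v : Fin j × Fin s → ℂ}
    (hv : (θ • 1 - H) *ᵥ v = 0) :
    actWith (powDivDiff θ H) Λ (blkE (⟨0, hj⟩ : Fin j)) *ᵥ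
      blkVec v ⟨j - 1, Nat.sub_one_lt_of_lt hj⟩ = v := by
  refine sub_eq_zero.mp ((hH.smul_one_sub θ).eq_zero_of_blkVec_mulVec_eq_zero ?_ hj ?_ ?_)
  · intro p q hpq
    rw [blk_smul_one_sub_of_ne θ H (fun h => by subst h; omega), ← Gam_eq_blk hpq]
    exact (hinv _ (by omega) (by omega)).neg
  · change blkVec (_ *ᵥ _) _ - blkVec v _ = 0
    rw [blkVec_mulVec_eq_blkRow_mulVec, hH.blkRow_last_actWith_powDivDiff hinv hj hdeg hlead,
      Matrix.one_mulVec, sub_self]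
  · intro p hp
    rw [Matrix.mulVec_sub, Matrix.mulVec_mulVec, ← mul_evalS_eq_sub_mul_actWith hann, hv,
      sub_zero, blkVec_mulVec_eq_blkRow_mulVec, blkRow_mul_right, blkRow_blkE,
      if_neg (fun h => by subst h; simp at hp), Matrix.zero_mul, Matrix.zero_mulVec]

end Hessenberg

/-- for a simple eigenvalue `θ` of a block upper Hessenberg `H` with
right/left eigenvectors `v, w`, the blocks satisfy `w₁* Λ(θ) = 0`, `Λ(θ) vⱼ = 0`
and `w* v = w₁* Λ'(θ) vⱼ`, where `Λ` is the block characteristic polynomial of `H`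
w.r.t. `E₁` with leading coefficient `Γ₂⁻¹ ⋯ Γⱼ⁻¹`. -/
theorem eigenvector_blocks_of_char_poly {j s : ℕ} (hj : 0 < j)
    (H : Matrix (Fin j × Fin s) (Fin j × Fin s) ℂ) (hH : BUH H)
    (hinv : ∀ i : ℕ, 2 ≤ i → i ≤ j → IsUnit (Gam H i))
    (Λ : Polynomial (Mat s)) (hdeg : Λ.natDegree = j)
    (hlead : Λ.leadingCoeff =
      ((List.range (j - 1)).map (fun m => (Gam H (m + 2))⁻¹)).prod)
    (hann : act Λ H (blkE (⟨0, hj⟩ : Fin j)) = 0)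
    (θ : ℂ)
    (v w : Fin j × Fin s → ℂ)
    (hvr : H.mulVec v = θ • v)
    (hwl : Matrix.vecMul (star w) H = θ • star w) :
    Matrix.vecMul (star fun a : Fin s => w (⟨0, hj⟩, a)) (evalS Λ θ) = 0 ∧
    (evalS Λ θ).mulVec (fun a : Fin s => v (⟨j - 1, by omega⟩, a)) = 0 ∧
    star w ⬝ᵥ v =
      (star fun a : Fin s => w (⟨0, hj⟩, a)) ⬝ᵥ
        (evalS (Polynomial.derivative Λ) θ).mulVec
          (fun a : Fin s => v (⟨j - 1, by omega⟩, a)) := by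
  have hv : (θ • 1 - H) *ᵥ v = 0 := by
    rw [Matrix.sub_mulVec, Matrix.smul_mulVec, Matrix.one_mulVec, hvr, sub_self]
  have hw : star w ᵥ* (θ • 1 - H) = 0 := by
    rw [Matrix.vecMul_sub, Matrix.vecMul_smul, Matrix.vecMul_one, hwl, sub_self]
  have hEΛ := mul_evalS_eq_sub_mul_actWith hann θ
  have hXv := hH.actWith_powDivDiff_mulVec_blkVec_last hinv hj hdeg hlead hann hv
  set vⱼ := blkVec v ⟨j - 1, Nat.sub_one_lt_of_lt hj⟩
  change blkVec (star w) ⟨0, hj⟩ ᵥ* evalS Λ θ = 0 ∧ evalS Λ θ *ᵥ vⱼ = 0 ∧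
    star w ⬝ᵥ v = blkVec (star w) ⟨0, hj⟩ ⬝ᵥ evalS (derivative Λ) θ *ᵥ vⱼ
  rw [← vecMul_blkE]
  refine ⟨?_, ?_, ?_⟩
  · rw [Matrix.vecMul_vecMul, hEΛ, ← Matrix.vecMul_vecMul, hw, Matrix.zero_vecMul]
  · have h := congrArg (fun M => blkVec (M *ᵥ vⱼ) ⟨0, hj⟩) hEΛ
    simp only [← Matrix.mulVec_mulVec, hXv, hv, blkVec_mulVec_eq_blkRow_mulVec, blkRow_blkE,
      if_pos, Matrix.one_mulVec] at h
    exact h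
  · rw [← Matrix.dotProduct_mulVec, Matrix.mulVec_mulVec, mul_evalS_derivative_eq Λ H,
      Matrix.add_mulVec, dotProduct_add, hXv, ← Matrix.mulVec_mulVec, Matrix.dotProduct_mulVec,
      hw, zero_dotProduct, add_zero]
end

section
/- Under the block Arnoldi/Petrov–Galerkin setting (orthonormal $\mathbf{U}_{j+1}=[\mathbf{U}_j,U_{j+1}]$ from Arnoldi on $(A,B)$ with $B=\mathbf{U}_jE_1R_B$, invertible $\mathbf{Z}_j^*\mathbf{U}_j$, $A_j := (\mathbf{Z}_j^*\mathbf{U}_j)^{-1}\mathbf{Z}_j^*A\mathbf{U}_j$), the Petrov–Galerkin residual $\mathrm{Res}_{B,j}(z) := B - (zI - A)\mathbf{U}_j(zI - A_j)^{-1}E_1R_B$ satisfies, for all $z$ outside the spectrum of $A_j$: $\mathrm{Res}_{B,j}(z) = [\Lambda(A)\circ B]\,\Lambda(z)^{-1}$, where $\Lambda$ is the monic block characteristic polynomial of $A_j$ with respect to $E_1 R_B$. -/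
open Matrix Polynomial

/-!
After the oblique projection the Arnoldi relation becomes a block Krylov decomposition
`A U = U A_j + R E_jᴴ` with `R = (I - U (Z*U)⁻¹ Z*) u Γ`, so
`(zI - A) U = U (zI - A_j) - R E_jᴴ` and the residual equals `R E_jᴴ (zI - A_j)⁻¹ E₁R_B`.
As `A_j` is block upper Hessenberg, `E_jᴴ A_j^i E₁` vanishes for `i < j - 1` and is invertible
for `i = j - 1`. Hence `A^i B = U A_j^i E₁R_B` for `i < j`, and `Λ(A_j) ∘ (E₁R_B) = 0` leaves
`Λ(A) ∘ B = R E_jᴴ A_j^{j-1} E₁R_B`. The same vanishing, applied to the divided difference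
`(Λ(z) - Λ(A_j)) / (z - A_j)`, gives `E_jᴴ (zI - A_j)⁻¹ E₁R_B Λ(z) = E_jᴴ A_j^{j-1} E₁R_B`;
this is invertible, so `Λ(z)` is too and the two sides agree.
-/

section DividedDifference

variable {m o : Type*} [Fintype m] [DecidableEq m] [Fintype o] {s : ℕ}
  {P : Polynomial (Mat s)} {d : ℕ}

theorem sub_smul_one_mul_geom_sum (M : Matrix m m ℂ) (z : ℂ) (i : ℕ) :
    (z • 1 - M) * ∑ k ∈ Finset.range i, z ^ k • M ^ (i - 1 - k) = z ^ i • 1 - M ^ i := by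
  simpa only [_root_.smul_pow, one_pow, Matrix.smul_mul, Matrix.one_mul] using
    ((Commute.one_left M).smul_left z).mul_geom_sum₂ i

/-- `[(P(z) - P(M)) / (z - M)] ∘ W`. -/
noncomputable def divDiffAct (P : Polynomial (Mat s)) (M : Matrix m m ℂ)
    (W : Matrix m (Fin s) ℂ) (z : ℂ) : Matrix m (Fin s) ℂ :=
  ∑ i ∈ Finset.range (P.natDegree + 1),
    (∑ k ∈ Finset.range i, z ^ k • M ^ (i - 1 - k)) * W * P.coeff i

theorem act_eq_sum_add_of_monic (hP : P.Monic) (hdeg : P.natDegree = d + 1)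
    (M : Matrix m m ℂ) (W : Matrix m (Fin s) ℂ) :
    act P M W = ∑ i ∈ Finset.range (d + 1), M ^ i * W * P.coeff i + M ^ (d + 1) * W := by
  rw [act, hdeg, Finset.sum_range_succ, ← hdeg, hP.coeff_natDegree, Matrix.mul_one, hdeg]

theorem mul_evalS_eq_act_add (M : Matrix m m ℂ) (W : Matrix m (Fin s) ℂ) (z : ℂ) :
    W * evalS P z = act P M W + (z • 1 - M) * divDiffAct P M W z := by
  simp only [evalS, act, divDiffAct, Matrix.mul_sum, ← Finset.sum_add_distrib]
  refine Finset.sum_congr rfl fun i _ => ?_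
  rw [← Matrix.mul_assoc, ← Matrix.mul_assoc, sub_smul_one_mul_geom_sum, Matrix.sub_mul,
    Matrix.sub_mul, Matrix.smul_mul, Matrix.smul_mul, Matrix.one_mul, Matrix.mul_smul]
  abel

variable {M : Matrix m m ℂ} {C : Matrix o m ℂ} {W : Matrix m (Fin s) ℂ}

/-- Only the top term `i = d + 1, k = 0` of the divided difference survives. -/
theorem mul_divDiffAct_eq (hP : P.Monic) (hdeg : P.natDegree = d + 1)
    (hC : ∀ i < d, C * (M ^ i * W) = 0) (z : ℂ) :
    C * divDiffAct P M W z = C * (M ^ d * W) := by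
  have hlead : P.coeff (d + 1) = 1 := hdeg ▸ hP.coeff_natDegree
  have hterm : ∀ i k, i - 1 - k < d →
      C * ((z ^ k • M ^ (i - 1 - k)) * W * P.coeff i) = 0 := fun i k hik => by
    rw [Matrix.smul_mul, Matrix.smul_mul, Matrix.mul_smul, ← Matrix.mul_assoc C, hC _ hik,
      Matrix.zero_mul, smul_zero]
  rw [divDiffAct, hdeg, Finset.sum_range_succ, Matrix.mul_add, Matrix.mul_sum,
    Finset.sum_eq_zero, zero_add, hlead, Matrix.mul_one, Matrix.sum_mul, Matrix.mul_sum,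
    Finset.sum_range_succ', Finset.sum_eq_zero, zero_add]
  · simp
  · intro k hk
    simpa [hlead] using hterm (d + 1) (k + 1) (by simp at hk; omega)
  · intro i hi
    rw [Matrix.sum_mul, Matrix.sum_mul, Matrix.mul_sum]
    exact Finset.sum_eq_zero fun k hk => hterm i k (by simp at hi hk; omega)

theorem mul_inv_mul_evalS_eq {z : ℂ} (hz : (z • (1 : Matrix m m ℂ) - M).det ≠ 0)
    (hP : P.Monic) (hdeg : P.natDegree = d + 1) (hann : act P M W = 0)
    (hC : ∀ i < d, C * (M ^ i * W) = 0) :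
    C * ((z • 1 - M)⁻¹ * W) * evalS P z = C * (M ^ d * W) := by
  rw [Matrix.mul_assoc C, Matrix.mul_assoc _ W, mul_evalS_eq_act_add M, hann, zero_add,
    ← Matrix.mul_assoc (z • 1 - M)⁻¹, Matrix.nonsing_inv_mul _ (isUnit_iff_ne_zero.mpr hz),
    Matrix.one_mul, mul_divDiffAct_eq hP hdeg hC]

end DividedDifference

section Krylov

variable {m n o l : Type*} [Fintype m] [Fintype n] [Fintype o]
  {A : Matrix n n ℂ} {U : Matrix n m ℂ} {M : Matrix m m ℂ} {R : Matrix n o ℂ}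
  {C : Matrix o m ℂ}

theorem mul_mul_eq_of_krylov (h : A * U = U * M + R * C) (X : Matrix m l ℂ) :
    A * (U * X) = U * (M * X) + R * (C * X) := by
  rw [← Matrix.mul_assoc, h, Matrix.add_mul, Matrix.mul_assoc, Matrix.mul_assoc]

variable [DecidableEq m] [DecidableEq n]

theorem pow_mul_mul_eq_of_krylov (h : A * U = U * M + R * C) {W : Matrix m l ℂ} {k : ℕ}
    (hC : ∀ i < k, C * (M ^ i * W) = 0) : A ^ k * (U * W) = U * (M ^ k * W) := by
  induction k with
  | zero => simp
  | succ k ih =>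
    rw [pow_succ', Matrix.mul_assoc, ih fun i hi => hC i (by omega), mul_mul_eq_of_krylov h,
      hC k k.lt_succ_self, Matrix.mul_zero, add_zero, ← Matrix.mul_assoc M, ← pow_succ']

theorem pow_succ_mul_mul_eq_of_krylov (h : A * U = U * M + R * C) {W : Matrix m l ℂ} {k : ℕ}
    (hC : ∀ i < k, C * (M ^ i * W) = 0) :
    A ^ (k + 1) * (U * W) = U * (M ^ (k + 1) * W) + R * (C * (M ^ k * W)) := by
  rw [pow_succ', Matrix.mul_assoc, pow_mul_mul_eq_of_krylov h hC, mul_mul_eq_of_krylov h,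
    ← Matrix.mul_assoc M, ← pow_succ']

theorem sub_mul_eq_of_krylov (h : A * U = U * M + R * C) (z : ℂ) :
    (z • 1 - A) * U = U * (z • 1 - M) - R * C := by
  rw [Matrix.sub_mul, Matrix.mul_sub, h, Matrix.smul_mul, Matrix.mul_smul, Matrix.one_mul,
    Matrix.mul_one]
  abel

theorem residual_eq_of_krylov (h : A * U = U * M + R * C) {z : ℂ}
    (hz : (z • (1 : Matrix m m ℂ) - M).det ≠ 0) (W : Matrix m l ℂ) :
    U * W - (z • 1 - A) * (U * ((z • 1 - M)⁻¹ * W)) =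
      R * (C * ((z • 1 - M)⁻¹ * W)) := by
  rw [← Matrix.mul_assoc, sub_mul_eq_of_krylov h, Matrix.sub_mul, Matrix.mul_assoc U,
    ← Matrix.mul_assoc (z • 1 - M), Matrix.mul_nonsing_inv _ (isUnit_iff_ne_zero.mpr hz),
    Matrix.one_mul, sub_sub_cancel, Matrix.mul_assoc]

theorem act_mul_eq_of_krylov {s d : ℕ} {P : Polynomial (Mat s)} {W : Matrix m (Fin s) ℂ}
    (h : A * U = U * M + R * C) (hP : P.Monic) (hdeg : P.natDegree = d + 1)
    (hann : act P M W = 0) (hC : ∀ i < d, C * (M ^ i * W) = 0) :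
    act P A (U * W) = R * (C * (M ^ d * W)) := by
  have hlow : ∀ i ∈ Finset.range (d + 1),
      A ^ i * (U * W) * P.coeff i = U * (M ^ i * W * P.coeff i) := fun i hi => by
    rw [pow_mul_mul_eq_of_krylov h fun k hk => hC k (by simp at hi; omega)]
    simp only [Matrix.mul_assoc]
  rw [act_eq_sum_add_of_monic hP hdeg, Finset.sum_congr rfl hlow,
    pow_succ_mul_mul_eq_of_krylov h hC, ← add_assoc, ← Matrix.mul_sum, ← Matrix.mul_add,
    ← act_eq_sum_add_of_monic hP hdeg, hann, Matrix.mul_zero, zero_add]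

end Krylov

theorem residual_eq_act_mul_inv_evalS_of_krylov {m n : Type*} [Fintype m] [DecidableEq m]
    [Fintype n] [DecidableEq n] {s d : ℕ} {A : Matrix n n ℂ} {U : Matrix n m ℂ}
    {M : Matrix m m ℂ} {R : Matrix n (Fin s) ℂ} {C : Matrix (Fin s) m ℂ}
    {W : Matrix m (Fin s) ℂ} {P : Polynomial (Mat s)} {z : ℂ}
    (h : A * U = U * M + R * C) (hP : P.Monic) (hdeg : P.natDegree = d + 1)
    (hann : act P M W = 0) (hC : ∀ i < d, C * (M ^ i * W) = 0)
    (hlast : IsUnit (C * (M ^ d * W))) (hz : (z • (1 : Matrix m m ℂ) - M).det ≠ 0) :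
    U * W - (z • 1 - A) * (U * ((z • 1 - M)⁻¹ * W)) =
      act P A (U * W) * (evalS P z)⁻¹ := by
  have hres := mul_inv_mul_evalS_eq hz hP hdeg hann hC
  have hunit : IsUnit (evalS P z).det := by
    rw [Matrix.isUnit_iff_isUnit_det, ← hres, Matrix.det_mul] at hlast
    exact isUnit_of_mul_isUnit_right hlast
  rw [residual_eq_of_krylov h hz, act_mul_eq_of_krylov h hP hdeg hann hC, ← hres,
    Matrix.mul_assoc R, Matrix.mul_assoc, Matrix.mul_nonsing_inv _ hunit, Matrix.mul_one]

section PetrovGalerkin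

variable {m n o : Type*} [Fintype m] [Fintype n] [Fintype o]
  {A : Matrix n n ℂ} {U Z : Matrix n m ℂ} {H : Matrix m m ℂ} {R : Matrix n o ℂ}
  {C : Matrix o m ℂ}

theorem inv_mul_mul_eq_add_of_arnoldi [DecidableEq m] (h : A * U = U * H + R * C)
    (hK : IsUnit (Zᴴ * U)) :
    (Zᴴ * U)⁻¹ * (Zᴴ * A * U) = H + (Zᴴ * U)⁻¹ * (Zᴴ * R) * C := by
  rw [Matrix.mul_assoc Zᴴ, h, Matrix.mul_add, Matrix.mul_add, ← Matrix.mul_assoc Zᴴ U,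
    ← Matrix.mul_assoc, Matrix.nonsing_inv_mul _ ((Matrix.isUnit_iff_isUnit_det _).mp hK),
    Matrix.one_mul]
  simp only [Matrix.mul_assoc]

theorem mul_eq_mul_add_of_arnoldi {M : Matrix m m ℂ} {G : Matrix m o ℂ}
    (h : A * U = U * H + R * C) (hM : M = H + G * C) :
    A * U = U * M + (R - U * G) * C := by
  rw [h, hM, Matrix.mul_add, Matrix.sub_mul, Matrix.mul_assoc]
  abel

end PetrovGalerkin

def colB {j s : ℕ} (W : Matrix (Fin j × Fin s) (Fin s) ℂ) (p : Fin j) : Mat s :=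
  Matrix.of fun a b => W (p, a) b

section BlockHessenberg

variable {j s : ℕ}

theorem colB_mul (M : Matrix (Fin j × Fin s) (Fin j × Fin s) ℂ)
    (W : Matrix (Fin j × Fin s) (Fin s) ℂ) (p : Fin j) :
    colB (M * W) p = ∑ r : Fin j, blk M p r * colB W r := by
  ext a b
  simp [colB, blk, Matrix.mul_apply, Matrix.sum_apply, Fintype.sum_prod_type]

theorem colB_mul_right (W : Matrix (Fin j × Fin s) (Fin s) ℂ) (X : Mat s) (p : Fin j) :
    colB (W * X) p = colB W p * X := by
  ext a b
  simp [colB, Matrix.mul_apply]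

theorem colB_blkE (i p : Fin j) : colB (blkE (s := s) i) p = if p = i then 1 else 0 := by
  ext a b
  by_cases h : p = i <;> simp [colB, blkE, Matrix.one_apply, h]

theorem conjTranspose_blkE_mul (i : Fin j) (W : Matrix (Fin j × Fin s) (Fin s) ℂ) :
    (blkE (s := s) i)ᴴ * W = colB W i := by
  ext a b
  simp only [Matrix.mul_apply, Matrix.conjTranspose_apply, blkE, colB, Matrix.of_apply,
    Fintype.sum_prod_type]
  rw [Finset.sum_eq_single i]
  · simp
  · intro r _ hr
    simp [hr]
  · simp

theorem blk_add_mul_conjTranspose_blkE_of_ne (H : Matrix (Fin j × Fin s) (Fin j × Fin s) ℂ)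
    (W : Matrix (Fin j × Fin s) (Fin s) ℂ) {i q : Fin j} (hq : q ≠ i) (p : Fin j) :
    blk (H + W * (blkE (s := s) i)ᴴ) p q = blk H p q := by
  ext a b
  simp [blk, Matrix.mul_apply, blkE, hq]

theorem BUH.add_mul_conjTranspose_blkE {H : Matrix (Fin j × Fin s) (Fin j × Fin s) ℂ}
    (hH : BUH H) (W : Matrix (Fin j × Fin s) (Fin s) ℂ) {i : Fin j} (hi : (i : ℕ) + 1 = j) :
    BUH (H + W * (blkE (s := s) i)ᴴ) := by
  intro p q hpq
  rw [blk_add_mul_conjTranspose_blkE_of_ne H W (fun he => by omega) p, hH p q hpq]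

theorem Gam_add_two (H : Matrix (Fin j × Fin s) (Fin j × Fin s) ℂ) {k : ℕ} (h : k + 1 < j) :
    Gam H (k + 2) = blk H ⟨k + 1, h⟩ ⟨k, by omega⟩ := by
  rw [Gam, dif_pos ⟨by omega, by omega⟩]
  rfl

theorem colB_pow_mul_blkE_eq_zero {M : Matrix (Fin j × Fin s) (Fin j × Fin s) ℂ} (hM : BUH M)
    {k : ℕ} {p q : Fin j} (h : (q : ℕ) + k < p) : colB (M ^ k * blkE (s := s) q) p = 0 := by
  induction k generalizing p with
  | zero =>
    rw [pow_zero, Matrix.one_mul, colB_blkE, if_neg fun he => by omega]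
  | succ k ih =>
    rw [pow_succ', Matrix.mul_assoc, colB_mul]
    refine Finset.sum_eq_zero fun r _ => ?_
    by_cases hr : (r : ℕ) + 1 < p
    · rw [hM p r hr, Matrix.zero_mul]
    · rw [ih (by omega), Matrix.mul_zero]

theorem isUnit_colB_pow_mul_blkE {M : Matrix (Fin j × Fin s) (Fin j × Fin s) ℂ} (hM : BUH M)
    (hsub : ∀ (k : ℕ) (h : k + 1 < j), IsUnit (blk M ⟨k + 1, h⟩ ⟨k, by omega⟩))
    {k : ℕ} (hk : k < j) :
    IsUnit (colB (M ^ k * blkE (s := s) (⟨0, by omega⟩ : Fin j)) ⟨k, hk⟩) := by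
  induction k with
  | zero =>
    rw [pow_zero, Matrix.one_mul, colB_blkE, if_pos rfl]
    exact isUnit_one
  | succ k ih =>
    rw [pow_succ', Matrix.mul_assoc, colB_mul, Finset.sum_eq_single (⟨k, by omega⟩ : Fin j)]
    · exact (hsub k hk).mul (ih (by omega))
    · intro r _ hr
      rcases Nat.lt_or_gt_of_ne (fun he => hr (Fin.ext he)) with hlt | hgt
      · rw [hM _ r (by simp; omega), Matrix.zero_mul]
      · rw [colB_pow_mul_blkE_eq_zero hM (by simp; omega), Matrix.mul_zero]
    · simp

end BlockHessenberg

/-- the Petrov–Galerkin residual satisfies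
`Res_{B,j}(z) = [Λ(A)∘B] Λ(z)⁻¹` where `Λ` is the monic block characteristic
polynomial of `A_j` with respect to `E₁ R_B`. -/
theorem residual_char_poly_formula {n j s : ℕ} (hj : 0 < j)
    (A : Matrix (Fin n) (Fin n) ℂ)
    (U Z : Matrix (Fin n) (Fin j × Fin s) ℂ)
    (u : Matrix (Fin n) (Fin s) ℂ)
    (Hj : Matrix (Fin j × Fin s) (Fin j × Fin s) ℂ) (Γ : Mat s)
    (harn : A * U = U * Hj + u * Γ * (blkE (s := s) (⟨j - 1, by omega⟩ : Fin j))ᴴ)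
    (hBUH : BUH Hj)
    (hsub : ∀ i : ℕ, 2 ≤ i → i ≤ j → IsUnit (Gam Hj i))
    (hZU : IsUnit (Zᴴ * U))
    (RB : Mat s) (hRB : IsUnit RB)
    (B : Matrix (Fin n) (Fin s) ℂ)
    (hB : B = U * blkE (s := s) (⟨0, hj⟩ : Fin j) * RB)
    (Aj : Matrix (Fin j × Fin s) (Fin j × Fin s) ℂ)
    (hAj : Aj = (Zᴴ * U)⁻¹ * (Zᴴ * A * U))
    (Λ : Polynomial (Mat s)) (hmonic : Λ.Monic) (hdeg : Λ.natDegree = j)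
    (hann : act Λ Aj (blkE (s := s) (⟨0, hj⟩ : Fin j) * RB) = 0)
    (z : ℂ)
    (hz : (z • (1 : Matrix (Fin j × Fin s) (Fin j × Fin s) ℂ) - Aj).det ≠ 0) :
    B - (z • (1 : Matrix (Fin n) (Fin n) ℂ) - A) *
        (U * ((z • (1 : Matrix (Fin j × Fin s) (Fin j × Fin s) ℂ) - Aj)⁻¹ *
          blkE (s := s) (⟨0, hj⟩ : Fin j) * RB)) =
      act Λ A B * (evalS Λ z)⁻¹ := by
  set E₁ := blkE (s := s) (⟨0, hj⟩ : Fin j)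
  set Eₗ := blkE (s := s) (⟨j - 1, by omega⟩ : Fin j)
  have hAjH : Aj = Hj + (Zᴴ * U)⁻¹ * (Zᴴ * (u * Γ)) * Eₗᴴ :=
    hAj ▸ inv_mul_mul_eq_add_of_arnoldi harn hZU
  have hBUHAj : BUH Aj := hAjH ▸ hBUH.add_mul_conjTranspose_blkE _ (by simp; omega)
  have hsubAj : ∀ (k : ℕ) (h : k + 1 < j), IsUnit (blk Aj ⟨k + 1, h⟩ ⟨k, by omega⟩) :=
    fun k h => by
      rw [hAjH, blk_add_mul_conjTranspose_blkE_of_ne _ _ (Fin.ne_of_val_ne (by simp; omega)),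
        ← Gam_add_two]
      exact hsub (k + 2) (by omega) (by omega)
  have hrow : ∀ i,
      Eₗᴴ * (Aj ^ i * (E₁ * RB)) = colB (Aj ^ i * E₁) ⟨j - 1, by omega⟩ * RB :=
    fun i => by rw [conjTranspose_blkE_mul, ← Matrix.mul_assoc, colB_mul_right]
  rw [hB, Matrix.mul_assoc U, Matrix.mul_assoc _ E₁ RB]
  refine residual_eq_act_mul_inv_evalS_of_krylov (mul_eq_mul_add_of_arnoldi harn hAjH) hmonic
    (d := j - 1) (by omega) hann (fun i hi => ?_) ?_ hz
  · rw [hrow, colB_pow_mul_blkE_eq_zero hBUHAj (by simp; omega), Matrix.zero_mul]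
  · rw [hrow]
    exact (isUnit_colB_pow_mul_blkE hBUHAj hsubAj _).mul hRB
end
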